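/- arXiv:2411.15727 — 4 statements merged into one kernel-verified Lean document; each statement's English description precedes it below -/
import Mathlib

section
/- With the setup of the prefix-assortment distribution (weights $u_0=1, u_1,\ldots,u_n > 0$, point $x$ in the MNL polyhedron with $x_1/u_1 \geq \cdots \geq x_n/u_n$, probabilities $\psi_0,\ldots,\psi_n$ on assortments $S_k = \{1,\ldots,k\}$ where $\psi_k = (x_k/u_k - x_{k+1}/u_{k+1})\sum_{\ell=0}^k u_\ell$ for $k < n$ and $\psi_n = (x_n/u_n)\sum_{\ell=0}^n u_\ell$), for every alternative $j \in \{1,\ldots,n\}$ we have $\sum_{k=j}^n \psi_k \cdot \frac{u_j}{\sum_{\ell=0}^k u_\ell} = x_j$. That is, sampling an assortment from this distribution and choosing via MNL realizes choice probability exactly $x_j$ for each alternative $j$. -/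
/-!
With `r k := x k / u k` for `k ≤ n` and `r (n + 1) := 0`, both formulas for `ψ` read
`ψ k = (r k - r (k + 1)) * ∑_{ℓ ≤ k} u ℓ`. Multiplying by the MNL probability
`u j / ∑_{ℓ ≤ k} u ℓ` cancels the denominator, so the sum over `k = j, …, n` telescopes to
`u j * r j = x j`.
-/

open Finset

namespace PrefixAssortment

lemma sum_range_succ_pos {n k : ℕ} {u : ℕ → ℝ} (h0 : 0 < u 0)
    (hu : ∀ j ∈ Icc 1 n, 0 < u j) (hk : k ≤ n) : 0 < ∑ ℓ ∈ range (k + 1), u ℓ := by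
  refine sum_pos (fun ℓ hℓ => ?_) nonempty_range_add_one
  rcases Nat.eq_zero_or_pos ℓ with rfl | hℓ0
  · exact h0
  · exact hu ℓ (mem_Icc.mpr ⟨hℓ0, (mem_range_succ_iff.mp hℓ).trans hk⟩)

lemma sum_Icc_mul_div_eq_of_eq_sub_mul {j n : ℕ} (hjn : j ≤ n) (r S ψ : ℕ → ℝ) (c : ℝ)
    (hS : ∀ k ∈ Icc j n, S k ≠ 0) (hψ : ∀ k ∈ Icc j n, ψ k = (r k - r (k + 1)) * S k) :
    ∑ k ∈ Icc j n, ψ k * (c / S k) = c * (r j - r (n + 1)) := by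
  calc ∑ k ∈ Icc j n, ψ k * (c / S k)
      = ∑ k ∈ Icc j n, -c * (r (k + 1) - r k) := by
        refine sum_congr rfl fun k hk => ?_
        rw [hψ k hk]
        field_simp [hS k hk]
        ring
    _ = c * (r j - r (n + 1)) := by
        rw [← mul_sum, sum_Icc_sub hjn]
        ring

end PrefixAssortment

open PrefixAssortment in
theorem stmt_1_general (n : ℕ) (u x ψ : ℕ → ℝ)
    (hu : ∀ j ∈ Finset.Icc 1 n, 0 < u j) (hu0 : u 0 = 1)
    (hψ : ∀ j < n, ψ j = (x j / u j - x (j + 1) / u (j + 1)) * ∑ ℓ ∈ Finset.range (j + 1), u ℓ)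
    (hψn : ψ n = x n / u n * ∑ ℓ ∈ Finset.range (n + 1), u ℓ) :
    ∀ j ∈ Finset.Icc 1 n,
      ∑ k ∈ Finset.Icc j n, ψ k * (u j / ∑ ℓ ∈ Finset.range (k + 1), u ℓ) = x j := by
  intro j hj
  set r : ℕ → ℝ := fun k => if k ≤ n then x k / u k else 0
  have hψr : ∀ k ∈ Icc j n,
      ψ k = (r k - r (k + 1)) * ∑ ℓ ∈ range (k + 1), u ℓ := by
    intro k hk
    rcases (mem_Icc.mp hk).2.lt_or_eq with hkn | rfl
    · simp only [r, hψ k hkn, if_pos hkn.le, if_pos (Nat.succ_le_of_lt hkn)]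
    · simp only [r, hψn, le_refl, if_pos, Nat.not_succ_le_self, if_false, sub_zero]
  have hden : ∀ k ∈ Icc j n, ∑ ℓ ∈ range (k + 1), u ℓ ≠ 0 := fun k hk =>
    (sum_range_succ_pos (hu0 ▸ one_pos) hu (mem_Icc.mp hk).2).ne'
  rw [sum_Icc_mul_div_eq_of_eq_sub_mul (mem_Icc.mp hj).2 r _ ψ (u j) hden hψr]
  simp only [r, if_pos (mem_Icc.mp hj).2, Nat.not_succ_le_self, if_false, sub_zero]
  field_simp [(hu j hj).ne']

theorem stmt_1 (n : ℕ) (hn : 1 ≤ n) (u x ψ : ℕ → ℝ)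
    (hu : ∀ j ∈ Finset.Icc 1 n, 0 < u j) (hu0 : u 0 = 1)
    (hx : ∀ j ∈ Finset.Icc 1 n, 0 ≤ x j)
    (hfeas : ∀ j ∈ Finset.Icc 1 n, x j / u j ≤ 1 - ∑ ℓ ∈ Finset.Icc 1 n, x ℓ)
    (hx0 : x 0 = 1 - ∑ j ∈ Finset.Icc 1 n, x j)
    (hmono : ∀ j ∈ Finset.Icc 1 (n - 1), x (j + 1) / u (j + 1) ≤ x j / u j)
    (hψ : ∀ j < n, ψ j = (x j / u j - x (j + 1) / u (j + 1)) * ∑ ℓ ∈ Finset.range (j + 1), u ℓ)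
    (hψn : ψ n = x n / u n * ∑ ℓ ∈ Finset.range (n + 1), u ℓ) :
    ∀ j ∈ Finset.Icc 1 n,
      ∑ k ∈ Finset.Icc j n, ψ k * (u j / ∑ ℓ ∈ Finset.range (k + 1), u ℓ) = x j :=
  stmt_1_general n u x ψ hu hu0 hψ hψn
end

section
/- Let $p, w \in [0,1]$, let $X \sim \mathrm{Bernoulli}(p)$ and $Y \sim \mathrm{Poisson}(wp)$. Then $wX$ is smaller than $Y$ in the convex stochastic order: for every convex function $\phi : \mathbb{R} \to \mathbb{R}$ for which the expectations exist, $\mathbb{E}[\phi(wX)] \leq \mathbb{E}[\phi(Y)]$. -/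
/-!
A convex `φ` lies above the line through `(0, φ 0)` and `(1, φ 1)` at every natural number, so the
Poisson(`w p`) expectation of `φ` is at least that of the affine function, namely
`φ 0 + w p (φ 1 - φ 0)`. On the other hand `w ∈ [0, 1]` lies on the chord, so
`(1 - p) φ 0 + p φ w ≤ φ 0 + p w (φ 1 - φ 0)`.
-/

open Real Set

lemma ConvexOn.add_mul_sub_le_of_one_le {φ : ℝ → ℝ} (hφ : ConvexOn ℝ univ φ) {x : ℝ}
    (hx : 1 ≤ x) : φ 0 + x * (φ 1 - φ 0) ≤ φ x := by
  have hslope : (φ 1 - φ 0) / (1 - 0) ≤ (φ x - φ 0) / (x - 0) :=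
    hφ.secant_mono (mem_univ 0) (mem_univ 1) (mem_univ x) one_ne_zero (by linarith) hx
  rw [sub_zero, sub_zero, div_one, le_div_iff₀ (by linarith)] at hslope
  linarith

lemma ConvexOn.le_add_mul_sub_of_mem_Icc {φ : ℝ → ℝ} (hφ : ConvexOn ℝ univ φ) {w : ℝ}
    (hw : w ∈ Icc (0 : ℝ) 1) : φ w ≤ φ 0 + w * (φ 1 - φ 0) := by
  have h := hφ.2 (mem_univ 0) (mem_univ 1) (sub_nonneg.2 hw.2) hw.1 (sub_add_cancel 1 w)
  simp only [smul_eq_mul, mul_zero, mul_one, zero_add] at h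
  linarith

lemma hasSum_exp_neg_mul_pow_div_factorial (x : ℝ) :
    HasSum (fun n : ℕ => exp (-x) * x ^ n / n.factorial) 1 := by
  have h := (NormedSpace.expSeries_div_hasSum_exp x).mul_left (exp (-x))
  simp only [← exp_eq_exp_ℝ, ← exp_add, neg_add_cancel, exp_zero, ← mul_div_assoc] at h
  exact h

lemma hasSum_exp_neg_mul_pow_div_factorial_mul_natCast (x : ℝ) :
    HasSum (fun n : ℕ => exp (-x) * x ^ n / n.factorial * n) x := by
  rw [← hasSum_nat_add_iff' 1]
  have h := (hasSum_exp_neg_mul_pow_div_factorial x).mul_left x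
  simp only [mul_one, Finset.range_one, Finset.sum_singleton, CharP.cast_eq_zero, mul_zero,
    sub_zero] at h ⊢
  refine h.congr_fun fun n => ?_
  rw [Nat.factorial_succ, pow_succ]
  push_cast
  field_simp

lemma hasSum_exp_neg_mul_pow_div_factorial_mul_affine (x a b : ℝ) :
    HasSum (fun n : ℕ => exp (-x) * x ^ n / n.factorial * (a + n * b)) (a + x * b) := by
  have h := ((hasSum_exp_neg_mul_pow_div_factorial x).mul_right a).add
    ((hasSum_exp_neg_mul_pow_div_factorial_mul_natCast x).mul_right b)
  simp only [one_mul] at h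
  exact h.congr_fun fun n => by ring

lemma ConvexOn.add_mul_sub_le_tsum_poisson {φ : ℝ → ℝ} (hφ : ConvexOn ℝ univ φ) {x : ℝ}
    (hx : 0 ≤ x) (hsum : Summable (fun n : ℕ => exp (-x) * x ^ n / n.factorial * φ n)) :
    φ 0 + x * (φ 1 - φ 0) ≤ ∑' n : ℕ, exp (-x) * x ^ n / n.factorial * φ n := by
  refine hasSum_le (fun n => ?_) (hasSum_exp_neg_mul_pow_div_factorial_mul_affine x _ _)
    hsum.hasSum
  rcases Nat.eq_zero_or_pos n with rfl | hn
  · simp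
  · exact mul_le_mul_of_nonneg_left (hφ.add_mul_sub_le_of_one_le (by exact_mod_cast hn))
      (by positivity)

theorem stmt_2_general (p w : ℝ) (hp0 : 0 ≤ p) (hw0 : 0 ≤ w) (hw1 : w ≤ 1)
    (φ : ℝ → ℝ) (hφ : ConvexOn ℝ Set.univ φ)
    (hsum : Summable (fun k : ℕ =>
      Real.exp (-(w * p)) * (w * p) ^ k / (Nat.factorial k) * φ k)) :
    (1 - p) * φ 0 + p * φ w ≤
      ∑' k : ℕ, Real.exp (-(w * p)) * (w * p) ^ k / (Nat.factorial k) * φ k := by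
  have hchord := mul_le_mul_of_nonneg_left (hφ.le_add_mul_sub_of_mem_Icc ⟨hw0, hw1⟩) hp0
  calc (1 - p) * φ 0 + p * φ w ≤ φ 0 + w * p * (φ 1 - φ 0) := by linarith
    _ ≤ _ := hφ.add_mul_sub_le_tsum_poisson (mul_nonneg hw0 hp0) hsum

/-- Bernoulli vs Poisson in the convex stochastic order: if `X ~ Bernoulli(p)` and
`Y ~ Poisson(w*p)` with `p, w ∈ [0,1]`, then `E[φ(wX)] ≤ E[φ(Y)]` for every convex `φ`
whose expectations exist. -/
theorem stmt_2 (p w : ℝ) (hp0 : 0 ≤ p) (hp1 : p ≤ 1) (hw0 : 0 ≤ w) (hw1 : w ≤ 1)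
    (φ : ℝ → ℝ) (hφ : ConvexOn ℝ Set.univ φ)
    (hsum : Summable (fun k : ℕ =>
      Real.exp (-(w * p)) * (w * p) ^ k / (Nat.factorial k) * φ k)) :
    (1 - p) * φ 0 + p * φ w ≤
      ∑' k : ℕ, Real.exp (-(w * p)) * (w * p) ^ k / (Nat.factorial k) * φ k :=
  stmt_2_general p w hp0 hw0 hw1 φ hφ hsum
end

section
/- Let $p, w \in [0,1]$, $X \sim \mathrm{Bernoulli}(p)$, $Y \sim \mathrm{Poisson}(wp)$. Then for every real $\alpha$, $\mathbb{E}[\max\{wX, \alpha\}] \leq \mathbb{E}[\max\{Y, \alpha\}]$. -/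
lemma aux_exp_tsum (l : ℝ) : ∑' k : ℕ, l ^ k / (Nat.factorial k) = Real.exp l := by
  rw [Real.exp_eq_exp_ℝ, NormedSpace.exp_eq_tsum_div]

lemma aux_shift (l : ℝ) (j : ℕ) :
    ((j + 1 : ℕ) : ℝ) * l ^ (j + 1) / (Nat.factorial (j + 1)) = l * (l ^ j / Nat.factorial j) := by
  rw [Nat.factorial_succ]
  have h1 : (Nat.factorial j : ℝ) ≠ 0 := Nat.cast_ne_zero.mpr (Nat.factorial_ne_zero j)
  have h2 : ((j : ℝ) + 1) ≠ 0 := by positivity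
  push_cast
  field_simp
  ring

lemma aux_summable_mul (l : ℝ) : Summable (fun k : ℕ => (k : ℝ) * l ^ k / Nat.factorial k) := by
  rw [← summable_nat_add_iff 1]
  have : (fun j : ℕ => ((j + 1 : ℕ) : ℝ) * l ^ (j + 1) / Nat.factorial (j + 1))
      = fun j : ℕ => l * (l ^ j / Nat.factorial j) := by
    funext j; exact aux_shift l j
  rw [this]
  exact (Real.summable_pow_div_factorial l).mul_left l

lemma aux_tsum_mul (l : ℝ) : ∑' k : ℕ, (k : ℝ) * l ^ k / Nat.factorial k = l * Real.exp l := by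
  rw [Summable.tsum_eq_zero_add (aux_summable_mul l)]
  simp only [Nat.cast_zero, zero_mul, pow_zero, Nat.factorial_zero, zero_div, zero_add]
  have : (fun j : ℕ => ((j + 1 : ℕ) : ℝ) * l ^ (j + 1) / Nat.factorial (j + 1))
      = fun j : ℕ => l * (l ^ j / Nat.factorial j) := by
    funext j; exact aux_shift l j
  push_cast at this ⊢
  rw [this, tsum_mul_left, aux_exp_tsum]

/-- For `X ~ Bernoulli(p)`, `Y ~ Poisson(w*p)` with `p, w ∈ [0,1]` and any real `α`,
`E[max{wX, α}] ≤ E[max{Y, α}]`. -/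
theorem stmt_3 (p w : ℝ) (hp0 : 0 ≤ p) (hp1 : p ≤ 1) (hw0 : 0 ≤ w) (hw1 : w ≤ 1)
    (α : ℝ) :
    (1 - p) * max 0 α + p * max w α ≤
      ∑' k : ℕ, Real.exp (-(w * p)) * (w * p) ^ k / (Nat.factorial k) * max (k : ℝ) α := by
  set l := w * p with hl
  have hl0 : 0 ≤ l := mul_nonneg hw0 hp0
  have hexp : Real.exp (-l) * Real.exp l = 1 := by
    rw [← Real.exp_add]; simp
  set f : ℕ → ℝ := fun k => Real.exp (-l) * l ^ k / (Nat.factorial k) * max (k : ℝ) α with hf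
  -- summability of f
  have hfac : ∀ k : ℕ, (0:ℝ) < Nat.factorial k := fun k => by
    exact_mod_cast Nat.factorial_pos k
  have hf_nonneg : ∀ k : ℕ, 0 ≤ f k := by
    intro k
    have : (0:ℝ) ≤ max (k : ℝ) α := le_trans (Nat.cast_nonneg k) (le_max_left _ _)
    positivity
  have hf_le : ∀ k : ℕ, f k ≤ Real.exp (-l) * ((k:ℝ) * l ^ k / Nat.factorial k)
      + (Real.exp (-l) * |α|) * (l ^ k / Nat.factorial k) := by
    intro k
    have hmax : max (k : ℝ) α ≤ (k : ℝ) + |α| := by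
      rcases max_cases (k : ℝ) α with ⟨h, _⟩ | ⟨h, _⟩
      · rw [h]; nlinarith [abs_nonneg α]
      · rw [h]; nlinarith [le_abs_self α, Nat.cast_nonneg (α := ℝ) k]
    have hnn : (0:ℝ) ≤ Real.exp (-l) * l ^ k / Nat.factorial k := by positivity
    calc f k ≤ Real.exp (-l) * l ^ k / Nat.factorial k * ((k : ℝ) + |α|) :=
          mul_le_mul_of_nonneg_left hmax hnn
      _ = Real.exp (-l) * ((k:ℝ) * l ^ k / Nat.factorial k)
          + (Real.exp (-l) * |α|) * (l ^ k / Nat.factorial k) := by ring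
  have hmajor : Summable (fun k : ℕ => Real.exp (-l) * ((k:ℝ) * l ^ k / Nat.factorial k)
      + (Real.exp (-l) * |α|) * (l ^ k / Nat.factorial k)) :=
    ((aux_summable_mul l).mul_left _).add ((Real.summable_pow_div_factorial l).mul_left _)
  have hf_summable : Summable f := Summable.of_nonneg_of_le hf_nonneg hf_le hmajor
  rcases le_or_gt α 0 with hα | hα
  · -- α ≤ 0 : LHS = l, RHS ≥ l
    have h1 : max (0:ℝ) α = 0 := max_eq_left hα
    have h2 : max w α = w := max_eq_left (le_trans hα hw0)
    rw [h1, h2, mul_zero, zero_add]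
    have hterm : ∀ k : ℕ, Real.exp (-l) * ((k:ℝ) * l ^ k / Nat.factorial k) ≤ f k := by
      intro k
      have : Real.exp (-l) * ((k:ℝ) * l ^ k / Nat.factorial k)
          = Real.exp (-l) * l ^ k / Nat.factorial k * (k : ℝ) := by ring
      rw [this]
      exact mul_le_mul_of_nonneg_left (le_max_left _ _) (by positivity)
    have := Summable.tsum_le_tsum hterm ((aux_summable_mul l).mul_left _) hf_summable
    rw [tsum_mul_left, aux_tsum_mul] at this
    calc p * w = Real.exp (-l) * (l * Real.exp l) := by
          rw [show Real.exp (-l) * (l * Real.exp l) = Real.exp (-l) * Real.exp l * l by ring,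
            hexp]; rw [hl]; ring
      _ ≤ _ := this
  · rcases le_or_gt w α with hwα | hwα
    · -- w ≤ α : LHS = α, RHS ≥ α
      have h1 : max (0:ℝ) α = α := max_eq_right hα.le
      have h2 : max w α = α := max_eq_right hwα
      rw [h1, h2]
      have hterm : ∀ k : ℕ, (Real.exp (-l) * α) * (l ^ k / Nat.factorial k) ≤ f k := by
        intro k
        have : (Real.exp (-l) * α) * (l ^ k / Nat.factorial k)
            = Real.exp (-l) * l ^ k / Nat.factorial k * α := by ring
        rw [this]
        exact mul_le_mul_of_nonneg_left (le_max_right _ _) (by positivity)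
      have := Summable.tsum_le_tsum hterm ((Real.summable_pow_div_factorial l).mul_left _) hf_summable
      rw [tsum_mul_left, aux_exp_tsum] at this
      calc (1 - p) * α + p * α = α := by ring
        _ = Real.exp (-l) * α * Real.exp l := by
            rw [show Real.exp (-l) * α * Real.exp l = Real.exp (-l) * Real.exp l * α by ring,
              hexp, one_mul]
        _ ≤ _ := this
    · -- 0 < α < w
      have h1 : max (0:ℝ) α = α := max_eq_right hα.le
      have h2 : max w α = w := max_eq_left hwα.le
      rw [h1, h2]
      have hkey : f = fun k : ℕ => Real.exp (-l) * ((k:ℝ) * l ^ k / Nat.factorial k)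
          + (if k = 0 then Real.exp (-l) * α else 0) := by
        funext k
        cases k with
        | zero => simp [hf, max_eq_right hα.le]
        | succ n =>
          have hk1 : α ≤ ((n+1 : ℕ) : ℝ) := by
            push_cast
            have : α < 1 := lt_of_lt_of_le hwα hw1
            nlinarith [Nat.cast_nonneg (α := ℝ) n]
          simp only [hf, Nat.succ_ne_zero, if_false, add_zero, max_eq_left hk1]
          ring
      have hsum2 : Summable (fun k : ℕ => if k = 0 then Real.exp (-l) * α else 0) := by
        apply summable_of_ne_finset_zero (s := {0})
        intro k hk
        simp only [Finset.mem_singleton] at hk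
        simp [hk]
      rw [hkey, Summable.tsum_add ((aux_summable_mul l).mul_left _) hsum2, tsum_mul_left, aux_tsum_mul,
        tsum_ite_eq]
      have hexp' : 1 - p ≤ Real.exp (-l) := by
        have := Real.add_one_le_exp (-l)
        rw [hl] at *
        nlinarith
      have h3 : Real.exp (-l) * (l * Real.exp l) = l := by
        rw [show Real.exp (-l) * (l * Real.exp l) = Real.exp (-l) * Real.exp l * l by ring, hexp,
          one_mul]
      rw [h3, hl]
      nlinarith
end

section
/- Let $X_1,\ldots,X_n$ be independent Bernoulli random variables with success probabilities $p_1,\ldots,p_n \in [0,1]$, and let $w_1,\ldots,w_n \in [0,1]$. Let $Y \sim \mathrm{Poisson}(\sum_{i=1}^n w_i p_i)$. Then $\sum_{i=1}^n w_i X_i \leq_{cx} Y$; in particular, for every convex function $\phi$ (with expectations existing), $\mathbb{E}[\phi(\sum_i w_i X_i)] \leq \mathbb{E}[\phi(Y)]$. -/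
/-!
Subtracting an affine minorant of `φ` reduces the claim to a nonnegative convex `ψ`: both sides
are linear in `φ` and agree on affine functions, since both laws have mass one and mean
`λ = ∑ wᵢ pᵢ`. For one summand, the secant `ℓ` of `ψ` through `b` and `b + 1` lies above `ψ` on
`[b, b + 1]` and below it at all other integers; as `w X` (`X ∼ Bernoulli p`) and
`Y ∼ Poisson (w p)` have the same mean, `E ψ (b + w X) ≤ E ℓ (w X) = E ℓ (Y) ≤ E ψ (b + Y)`.
Replacing the summands one at a time, the Poisson laws accumulate into `Poisson λ` by convolution.
Since `ψ ≥ 0`, all of this happens in `ℝ≥0∞`, where no integrability has to be checked.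
-/

open Finset MeasureTheory ProbabilityTheory
open scoped ENNReal NNReal

theorem Finset.sum_powerset_insert_prod_mul_prod {ι R : Type*} [DecidableEq ι] [CommSemiring R]
    {x : ι} {s : Finset ι} (hx : x ∉ s) (p q : ι → R) (f : Finset ι → R) :
    ∑ S ∈ (insert x s).powerset, (∏ i ∈ S, p i) * (∏ i ∈ insert x s \ S, q i) * f S =
      ∑ T ∈ s.powerset, (∏ i ∈ T, p i) * (∏ i ∈ s \ T, q i) *
        (q x * f T + p x * f (insert x T)) := by
  rw [sum_powerset_insert hx, ← sum_add_distrib]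
  refine sum_congr rfl fun T hT => ?_
  have hxT : x ∉ T := fun h => hx (mem_powerset.1 hT h)
  rw [insert_sdiff_of_notMem _ hxT, prod_insert (by simp [hx]), insert_sdiff_insert,
    sdiff_insert_of_notMem hx, prod_insert hxT]
  ring

section Bernoulli

variable {ι : Type*} [DecidableEq ι]

theorem sum_powerset_prod_mul_prod_one_sub (p : ι → ℝ) (s : Finset ι) :
    ∑ S ∈ s.powerset, (∏ i ∈ S, p i) * ∏ i ∈ s \ S, (1 - p i) = 1 := by
  simp [← prod_add]

theorem sum_powerset_prod_mul_prod_one_sub_mul_affine (p w : ι → ℝ) (s : Finset ι) (c c' : ℝ) :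
    ∑ S ∈ s.powerset, (∏ i ∈ S, p i) * (∏ i ∈ s \ S, (1 - p i)) * (c * ∑ i ∈ S, w i + c') =
      c * ∑ i ∈ s, w i * p i + c' := by
  induction s using Finset.induction_on with
  | empty => simp
  | insert x s hx ih =>
    have hxT : ∀ T ∈ s.powerset, x ∉ T := fun T hT h => hx (mem_powerset.1 hT h)
    rw [sum_powerset_insert_prod_mul_prod hx, sum_insert hx]
    calc _ = ∑ T ∈ s.powerset, (∏ i ∈ T, p i) * (∏ i ∈ s \ T, (1 - p i)) *
          ((c * ∑ i ∈ T, w i + c') + c * w x * p x) :=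
          sum_congr rfl fun T hT => by rw [sum_insert (hxT T hT)]; ring
      _ = _ := by
        simp only [mul_add _ _ (c * w x * p x), sum_add_distrib, ← sum_mul, ih,
          sum_powerset_prod_mul_prod_one_sub]
        ring

end Bernoulli

namespace ProbabilityTheory

theorem hasSum_mul_natCast_poissonMeasure (r : ℝ≥0) :
    HasSum (fun n : ℕ => Real.exp (-r) * r ^ n / n.factorial * n) r := by
  rw [← hasSum_nat_add_iff' 1]
  convert! (hasSum_one_poissonMeasure r).mul_left (r : ℝ) using 1
  · funext n
    rw [Nat.factorial_succ]
    push_cast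
    field_simp
    ring
  · simp

theorem hasSum_poissonMeasure_affine (r : ℝ≥0) (c c' : ℝ) :
    HasSum (fun n : ℕ => Real.exp (-r) * r ^ n / n.factorial * (c * n + c')) (c * r + c') := by
  convert! ((hasSum_mul_natCast_poissonMeasure r).mul_left c).add
    ((hasSum_one_poissonMeasure r).mul_left c') using 1
  · funext n; ring
  · ring

theorem lintegral_poissonMeasure (r : ℝ≥0) (g : ℕ → ℝ≥0∞) :
    ∫⁻ n, g n ∂Po(r) = ∑' n, ENNReal.ofReal (Real.exp (-r) * r ^ n / n.factorial) * g n := by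
  simp [lintegral_countable', poissonMeasure_singleton, mul_comm]

theorem lintegral_lintegral_add_poissonMeasure (r₁ r₂ : ℝ≥0) (g : ℕ → ℝ≥0∞) :
    ∫⁻ k, ∫⁻ j, g (k + j) ∂Po(r₂) ∂Po(r₁) = ∫⁻ m, g m ∂Po(r₁ + r₂) := by
  rw [← poissonMeasure_conv_poissonMeasure, Measure.lintegral_conv .of_discrete]

end ProbabilityTheory

theorem ENNReal.ofReal_tsum_le {α : Type*} {f : α → ℝ} (hf : Summable f) :
    ENNReal.ofReal (∑' a, f a) ≤ ∑' a, ENNReal.ofReal (f a) := by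
  have hf' : Summable fun a => max (f a) 0 :=
    hf.abs.of_nonneg_of_le (fun _ => le_max_right _ _) fun _ =>
      max_le (le_abs_self _) (abs_nonneg _)
  calc ENNReal.ofReal (∑' a, f a) ≤ ENNReal.ofReal (∑' a, max (f a) 0) :=
        ENNReal.ofReal_le_ofReal (hf.tsum_le_tsum (fun _ => le_max_left _ _) hf')
    _ = ∑' a, ENNReal.ofReal (f a) := by
        rw [ENNReal.ofReal_tsum_of_nonneg (fun _ => le_max_right _ _) hf']
        simp

theorem ConvexOn.map_add_le_secant {ψ : ℝ → ℝ} (hψ : ConvexOn ℝ Set.univ ψ) (a : ℝ) {t : ℝ}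
    (ht₀ : 0 ≤ t) (ht₁ : t ≤ 1) : ψ (a + t) ≤ ψ a + t * (ψ (a + 1) - ψ a) := by
  have h := hψ.2 (Set.mem_univ a) (Set.mem_univ (a + 1)) (sub_nonneg.2 ht₁) ht₀ (by ring)
  simp only [smul_eq_mul] at h
  rw [show (1 - t) * a + t * (a + 1) = a + t by ring] at h
  linarith

theorem ConvexOn.secant_le_map_add_natCast {ψ : ℝ → ℝ} (hψ : ConvexOn ℝ Set.univ ψ) (a : ℝ)
    (k : ℕ) : ψ a + k * (ψ (a + 1) - ψ a) ≤ ψ (a + k) := by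
  rcases Nat.eq_zero_or_pos k with rfl | hk
  · simp
  have hk' : (1 : ℝ) ≤ k := by exact_mod_cast hk
  have h := hψ.secant_mono (Set.mem_univ a) (Set.mem_univ (a + 1)) (Set.mem_univ (a + k))
    (by simp) (by simp; positivity) (by linarith)
  simp only [add_sub_cancel_left, div_one] at h
  rw [le_div_iff₀ (by positivity)] at h
  linarith

theorem ofReal_bernoulli_le_lintegral_poissonMeasure {ψ : ℝ → ℝ} (hψ : ConvexOn ℝ Set.univ ψ)
    (hψ₀ : ∀ x, 0 ≤ ψ x) {p w : ℝ} (hp₀ : 0 ≤ p) (hp₁ : p ≤ 1) (hw₀ : 0 ≤ w) (hw₁ : w ≤ 1)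
    (b : ℝ) :
    ENNReal.ofReal (1 - p) * ENNReal.ofReal (ψ b) + ENNReal.ofReal p * ENNReal.ofReal (ψ (b + w)) ≤
      ∫⁻ k, ENNReal.ofReal (ψ (b + k)) ∂Po((w * p).toNNReal) := by
  set q := (w * p).toNNReal
  have hq : (q : ℝ) = w * p := Real.coe_toNNReal _ (mul_nonneg hw₀ hp₀)
  set Δ := ψ (b + 1) - ψ b
  have hsecant := hasSum_poissonMeasure_affine q Δ (ψ b)
  calc ENNReal.ofReal (1 - p) * ENNReal.ofReal (ψ b) + ENNReal.ofReal p * ENNReal.ofReal (ψ (b + w))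
      = ENNReal.ofReal ((1 - p) * ψ b + p * ψ (b + w)) := by
        rw [ENNReal.ofReal_add (mul_nonneg (by linarith) (hψ₀ _)) (mul_nonneg hp₀ (hψ₀ _)),
          ENNReal.ofReal_mul (by linarith), ENNReal.ofReal_mul hp₀]
    _ ≤ ENNReal.ofReal (Δ * q + ψ b) := by
        refine ENNReal.ofReal_le_ofReal ?_
        have := mul_le_mul_of_nonneg_left (hψ.map_add_le_secant b hw₀ hw₁) hp₀
        rw [hq]
        linarith
    _ = ENNReal.ofReal (∑' k : ℕ, Real.exp (-q) * q ^ k / k.factorial * (Δ * k + ψ b)) := by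
        rw [hsecant.tsum_eq]
    _ ≤ ∑' k : ℕ, ENNReal.ofReal (Real.exp (-q) * q ^ k / k.factorial * (Δ * k + ψ b)) :=
        ENNReal.ofReal_tsum_le hsecant.summable
    _ ≤ ∑' k : ℕ, ENNReal.ofReal (Real.exp (-q) * q ^ k / k.factorial) *
          ENNReal.ofReal (ψ (b + k)) := by
        refine ENNReal.tsum_le_tsum fun k => ?_
        rw [← ENNReal.ofReal_mul (by positivity)]
        gcongr
        linarith [hψ.secant_le_map_add_natCast b k]
    _ = ∫⁻ k, ENNReal.ofReal (ψ (b + k)) ∂Po(q) := (lintegral_poissonMeasure q _).symm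

section WeightedBernoulli

variable {ι : Type*} [DecidableEq ι]

/-- `E[g (a + ∑ i ∈ s, w i * X i)]` for independent `X i ∼ Bernoulli (p i)`. -/
noncomputable def weightedBernoulliLIntegral (p w : ι → ℝ) (s : Finset ι) (g : ℝ → ℝ≥0∞)
    (a : ℝ) : ℝ≥0∞ :=
  ∑ S ∈ s.powerset, (∏ i ∈ S, ENNReal.ofReal (p i)) * (∏ i ∈ s \ S, ENNReal.ofReal (1 - p i)) *
    g (a + ∑ i ∈ S, w i)

variable (p w : ι → ℝ)

@[simp]
theorem weightedBernoulliLIntegral_empty (g : ℝ → ℝ≥0∞) (a : ℝ) :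
    weightedBernoulliLIntegral p w ∅ g a = g a := by
  simp [weightedBernoulliLIntegral]

theorem weightedBernoulliLIntegral_insert {x : ι} {s : Finset ι} (hx : x ∉ s) (g : ℝ → ℝ≥0∞)
    (a : ℝ) : weightedBernoulliLIntegral p w (insert x s) g a =
      weightedBernoulliLIntegral p w s
        (fun b => ENNReal.ofReal (1 - p x) * g b + ENNReal.ofReal (p x) * g (b + w x)) a := by
  rw [weightedBernoulliLIntegral, sum_powerset_insert_prod_mul_prod hx]
  refine sum_congr rfl fun T hT => ?_
  rw [sum_insert fun h => hx (mem_powerset.1 hT h), add_left_comm, add_comm (w x)]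

theorem weightedBernoulliLIntegral_mono (s : Finset ι) {g h : ℝ → ℝ≥0∞} (hgh : g ≤ h) (a : ℝ) :
    weightedBernoulliLIntegral p w s g a ≤ weightedBernoulliLIntegral p w s h a := by
  unfold weightedBernoulliLIntegral
  gcongr
  exact hgh _

theorem weightedBernoulliLIntegral_lintegral (s : Finset ι) (μ : Measure ℕ) (g : ℝ → ℝ≥0∞)
    (a : ℝ) : weightedBernoulliLIntegral p w s (fun b => ∫⁻ k, g (b + k) ∂μ) a =
      ∫⁻ k, weightedBernoulliLIntegral p w s g (a + k) ∂μ := by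
  simp only [weightedBernoulliLIntegral]
  rw [lintegral_finsetSum _ fun _ _ => .of_discrete]
  refine sum_congr rfl fun S _ => ?_
  rw [lintegral_const_mul _ .of_discrete]
  simp only [add_right_comm]

variable {p w}

theorem weightedBernoulliLIntegral_le_lintegral_poissonMeasure
    (hp : ∀ i, 0 ≤ p i ∧ p i ≤ 1) (hw : ∀ i, 0 ≤ w i ∧ w i ≤ 1) {ψ : ℝ → ℝ}
    (hψ : ConvexOn ℝ Set.univ ψ) (hψ₀ : ∀ x, 0 ≤ ψ x) (s : Finset ι) (a : ℝ) :
    weightedBernoulliLIntegral p w s (fun x => ENNReal.ofReal (ψ x)) a ≤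
      ∫⁻ k, ENNReal.ofReal (ψ (a + k)) ∂Po(∑ i ∈ s, (w i * p i).toNNReal) := by
  induction s using Finset.induction_on generalizing a with
  | empty =>
    rw [weightedBernoulliLIntegral_empty, sum_empty, lintegral_poissonMeasure]
    refine le_trans (le_of_eq ?_) (ENNReal.le_tsum 0)
    simp
  | insert x s hx ih =>
    rw [weightedBernoulliLIntegral_insert p w hx, sum_insert hx,
      ← lintegral_lintegral_add_poissonMeasure]
    calc _ ≤ weightedBernoulliLIntegral p w s
          (fun b => ∫⁻ k, ENNReal.ofReal (ψ (b + k)) ∂Po((w x * p x).toNNReal)) a :=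
          weightedBernoulliLIntegral_mono p w s (fun b =>
            ofReal_bernoulli_le_lintegral_poissonMeasure hψ hψ₀ (hp x).1 (hp x).2 (hw x).1
              (hw x).2 b) a
      _ = ∫⁻ k, weightedBernoulliLIntegral p w s (fun x => ENNReal.ofReal (ψ x)) (a + k)
          ∂Po((w x * p x).toNNReal) :=
          weightedBernoulliLIntegral_lintegral p w s _ (fun x => ENNReal.ofReal (ψ x)) a
      _ ≤ _ := by
        refine lintegral_mono fun k => (ih (a + k)).trans_eq ?_
        simp only [Nat.cast_add, add_assoc]

theorem ofReal_sum_powerset_eq_weightedBernoulliLIntegral (hp : ∀ i, 0 ≤ p i ∧ p i ≤ 1)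
    {ψ : ℝ → ℝ} (hψ₀ : ∀ x, 0 ≤ ψ x) (s : Finset ι) :
    ENNReal.ofReal (∑ S ∈ s.powerset, ((∏ i ∈ S, p i) * ∏ i ∈ s \ S, (1 - p i)) *
        ψ (∑ i ∈ S, w i)) =
      weightedBernoulliLIntegral p w s (fun x => ENNReal.ofReal (ψ x)) 0 := by
  have hp₀ : ∀ T : Finset ι, ∀ i ∈ T, 0 ≤ p i := fun _ i _ => (hp i).1
  have hp₁ : ∀ T : Finset ι, ∀ i ∈ T, 0 ≤ 1 - p i := fun _ i _ => sub_nonneg.2 (hp i).2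
  have hc : ∀ S : Finset ι, 0 ≤ (∏ i ∈ S, p i) * ∏ i ∈ s \ S, (1 - p i) := fun S =>
    mul_nonneg (prod_nonneg (hp₀ S)) (prod_nonneg (hp₁ _))
  rw [ENNReal.ofReal_sum_of_nonneg fun S _ => mul_nonneg (hc S) (hψ₀ _)]
  refine sum_congr rfl fun S _ => ?_
  rw [ENNReal.ofReal_mul (hc S), ENNReal.ofReal_mul (prod_nonneg (hp₀ S)),
    ENNReal.ofReal_prod_of_nonneg (hp₀ S), ENNReal.ofReal_prod_of_nonneg (hp₁ _), zero_add]

theorem sum_powerset_le_tsum_poisson_of_nonneg (hp : ∀ i, 0 ≤ p i ∧ p i ≤ 1)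
    (hw : ∀ i, 0 ≤ w i ∧ w i ≤ 1) {ψ : ℝ → ℝ} (hψ : ConvexOn ℝ Set.univ ψ)
    (hψ₀ : ∀ x, 0 ≤ ψ x) (s : Finset ι)
    (hsum : Summable fun k : ℕ => Real.exp (-(∑ i ∈ s, w i * p i)) *
      (∑ i ∈ s, w i * p i) ^ k / k.factorial * ψ k) :
    ∑ S ∈ s.powerset, ((∏ i ∈ S, p i) * ∏ i ∈ s \ S, (1 - p i)) * ψ (∑ i ∈ S, w i) ≤
      ∑' k : ℕ, Real.exp (-(∑ i ∈ s, w i * p i)) *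
        (∑ i ∈ s, w i * p i) ^ k / k.factorial * ψ k := by
  have hr : ((∑ i ∈ s, (w i * p i).toNNReal : ℝ≥0) : ℝ) = ∑ i ∈ s, w i * p i := by
    simp [Real.coe_toNNReal _ (mul_nonneg (hw _).1 (hp _).1)]
  rw [← hr] at hsum ⊢
  rw [← ENNReal.ofReal_le_ofReal_iff (tsum_nonneg fun k => mul_nonneg (by positivity) (hψ₀ _)),
    ofReal_sum_powerset_eq_weightedBernoulliLIntegral hp hψ₀,
    ENNReal.ofReal_tsum_of_nonneg (fun k => mul_nonneg (by positivity) (hψ₀ _)) hsum]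
  refine (weightedBernoulliLIntegral_le_lintegral_poissonMeasure hp hw hψ hψ₀ s 0).trans_eq ?_
  rw [lintegral_poissonMeasure]
  refine tsum_congr fun k => ?_
  rw [zero_add, ENNReal.ofReal_mul (by positivity)]

end WeightedBernoulli

/-- A `[0,1]`-weighted sum of independent Bernoulli random variables is dominated in the
convex order by a Poisson random variable with the matching mean. -/
theorem stmt_4 (n : ℕ) (p w : Fin n → ℝ)
    (hp : ∀ i, 0 ≤ p i ∧ p i ≤ 1) (hw : ∀ i, 0 ≤ w i ∧ w i ≤ 1)
    (φ : ℝ → ℝ) (hφ : ConvexOn ℝ Set.univ φ)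
    (hsum : Summable (fun k : ℕ =>
      Real.exp (-(∑ i, w i * p i)) * (∑ i, w i * p i) ^ k / (Nat.factorial k) * φ k)) :
    ∑ S ∈ (Finset.univ : Finset (Fin n)).powerset,
        ((∏ i ∈ S, p i) * ∏ i ∈ Finset.univ \ S, (1 - p i)) * φ (∑ i ∈ S, w i) ≤
      ∑' k : ℕ,
        Real.exp (-(∑ i, w i * p i)) * (∑ i, w i * p i) ^ k / (Nat.factorial k) * φ k := by
  obtain ⟨c, c', hℓ⟩ := hφ.exists_affine_le_real isClosed_univ
    (by simpa using hφ.continuousOn_interior.lowerSemicontinuousOn)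
  have hℓsum := hasSum_poissonMeasure_affine (∑ i, w i * p i).toNNReal c c'
  rw [Real.coe_toNNReal _ (sum_nonneg fun i _ => mul_nonneg (hw i).1 (hp i).1)] at hℓsum
  have hψ : ConvexOn ℝ Set.univ fun x => φ x - (c * x + c') :=
    hφ.sub (((LinearMap.mul ℝ ℝ c).concaveOn convex_univ).add_const c')
  have key := sum_powerset_le_tsum_poisson_of_nonneg hp hw hψ
    (fun x => sub_nonneg.2 (hℓ x trivial)) univ
    ((hsum.sub hℓsum.summable).congr fun k => by ring)
  simp only [mul_sub, sum_sub_distrib] at key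
  rw [hsum.tsum_sub hℓsum.summable, hℓsum.tsum_eq,
    sum_powerset_prod_mul_prod_one_sub_mul_affine] at key
  linarith
end
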